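/- Let P^s_l(z, T₁, T₂, T₄) be the polynomials over ℚ in variables z, T₁, T₂, T₄ defined recursively by P^0_l = 1 and P^{s+1}_l = P^1_{l+s} · P^s_l − (z · (1/4) ∂²/∂z² + (l + s − 1/2) · (1/2) ∂/∂z) P^s_l, where P^1_m(z, T₁, T₂, T₄) = z(T₁T₄ − T₂²) − (m − 1/2) T₂. Then for every s, the evaluation b^s_l(T₁, T₂, T₄) := P^s_l(0, T₁, T₂, T₄) is a homogeneous polynomial of degree s in T₁, T₂, T₄. -/

import Mathlib

open Polynomial

/-- `P¹_m(z,T₁,T₂,T₄) = z·(T₁T₄ − T₂²) − (m − 1/2)·T₂`, a polynomial in `z` with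
coefficients in `ℚ[T₁,T₂,T₄]` (the variables `T₁,T₂,T₄` are `X 0, X 1, X 2`). -/
noncomputable def P1 (m : ℚ) : Polynomial (MvPolynomial (Fin 3) ℚ) :=
  Polynomial.X * Polynomial.C (MvPolynomial.X 0 * MvPolynomial.X 2 - MvPolynomial.X 1 ^ 2) -
    Polynomial.C (MvPolynomial.C (m - 1 / 2) * MvPolynomial.X 1)

/-- The Böcherer–Schmidt polynomials `P^s_l`, defined recursively by `P^0_l = 1` and
`P^{s+1}_l = P¹_{l+s} · P^s_l − (z·(1/4)·∂²_z + (l + s − 1/2)·(1/2)·∂_z) P^s_l`. -/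
noncomputable def Ppol (l : ℚ) : ℕ → Polynomial (MvPolynomial (Fin 3) ℚ)
  | 0 => 1
  | s + 1 =>
      P1 (l + s) * Ppol l s -
        (((1 : ℚ) / 4) • (Polynomial.X * Polynomial.derivative (Polynomial.derivative (Ppol l s))) +
          ((l + (s : ℚ) - 1 / 2) / 2) • Polynomial.derivative (Ppol l s))

/-- `b^s_l(T₁,T₂,T₄) = P^s_l(0,T₁,T₂,T₄)`. -/
noncomputable def bpol (l : ℚ) (s : ℕ) : MvPolynomial (Fin 3) ℚ := (Ppol l s).eval 0

/-! Give `z` weight `-1` and each `Tᵢ` weight `1`. The recursion preserves weighted homogeneity: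
`P¹_m` has weight `1`, and `z ∂²_z` and `∂_z` both raise the weight by `1`. Hence `P^s_l` has
weight `s`, and its constant term in `z` is homogeneous of degree `s` in the `Tᵢ`. -/

namespace Polynomial

variable {σ R : Type*}

section CommSemiring

variable [CommSemiring R]

/-- Homogeneity of weight `n` when `z` has weight `-1`. -/
def CoeffHomogeneous (n : ℕ) (p : (MvPolynomial σ R)[X]) : Prop :=
  ∀ k, (p.coeff k).IsHomogeneous (n + k)

namespace CoeffHomogeneous

variable {m n : ℕ} {p q : (MvPolynomial σ R)[X]}

theorem C {c : MvPolynomial σ R} (hc : c.IsHomogeneous n) :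
    CoeffHomogeneous n (Polynomial.C c) := by
  intro k
  rw [coeff_C]
  split_ifs with hk
  · simpa [hk] using hc
  · exact MvPolynomial.isHomogeneous_zero _ _ _

theorem one : CoeffHomogeneous 0 (1 : (MvPolynomial σ R)[X]) := by
  simpa using C (MvPolynomial.isHomogeneous_one σ R)

theorem add (hp : CoeffHomogeneous n p) (hq : CoeffHomogeneous n q) :
    CoeffHomogeneous n (p + q) :=
  fun k => by simpa only [coeff_add] using (hp k).add (hq k)

theorem smul (r : R) (hp : CoeffHomogeneous n p) : CoeffHomogeneous n (r • p) :=
  fun k => by simpa only [coeff_smul, MvPolynomial.smul_eq_C_mul] using (hp k).C_mul r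

theorem mul (hp : CoeffHomogeneous m p) (hq : CoeffHomogeneous n q) :
    CoeffHomogeneous (m + n) (p * q) := by
  intro k
  rw [coeff_mul]
  refine MvPolynomial.IsHomogeneous.sum _ _ _ fun ij hij => ?_
  rw [Finset.HasAntidiagonal.mem_antidiagonal] at hij
  convert (hp ij.1).mul (hq ij.2) using 1
  omega

theorem X_mul (hp : CoeffHomogeneous (n + 1) p) : CoeffHomogeneous n (X * p) := by
  rintro (_ | k)
  · simpa using MvPolynomial.isHomogeneous_zero σ R n
  · rw [coeff_X_mul]
    convert hp k using 1
    omega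

theorem derivative (hp : CoeffHomogeneous n p) : CoeffHomogeneous (n + 1) (derivative p) := by
  intro k
  have hcast : ((k : MvPolynomial σ R) + 1).IsHomogeneous 0 := by
    rw [← map_natCast MvPolynomial.C, ← map_one MvPolynomial.C, ← map_add]
    exact MvPolynomial.isHomogeneous_C σ _
  rw [coeff_derivative]
  convert (hp (k + 1)).mul hcast using 1
  omega

end CoeffHomogeneous

end CommSemiring

theorem CoeffHomogeneous.sub [CommRing R] {n : ℕ} {p q : (MvPolynomial σ R)[X]}
    (hp : CoeffHomogeneous n p) (hq : CoeffHomogeneous n q) : CoeffHomogeneous n (p - q) :=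
  fun k => by simpa only [coeff_sub] using (hp k).sub (hq k)

end Polynomial

theorem coeffHomogeneous_P1 (m : ℚ) : CoeffHomogeneous 1 (P1 m) := by
  have hdisc : (MvPolynomial.X 0 * MvPolynomial.X 2 - MvPolynomial.X 1 ^ 2 :
      MvPolynomial (Fin 3) ℚ).IsHomogeneous 2 :=
    ((MvPolynomial.isHomogeneous_X _ _).mul (MvPolynomial.isHomogeneous_X _ _)).sub
      ((MvPolynomial.isHomogeneous_X _ _).pow 2)
  exact (CoeffHomogeneous.C hdisc).X_mul.sub
    (.C (MvPolynomial.isHomogeneous_C_mul_X _ _))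

theorem coeffHomogeneous_Ppol (l : ℚ) (s : ℕ) : CoeffHomogeneous s (Ppol l s) := by
  induction s with
  | zero => exact .one
  | succ s ih =>
    rw [Ppol]
    refine .sub (by simpa only [add_comm 1 s] using (coeffHomogeneous_P1 _).mul ih)
      ((ih.derivative.derivative.X_mul.smul _).add (ih.derivative.smul _))

/-- `b^s_l := P^s_l(0, T₁, T₂, T₄)` is a homogeneous polynomial of degree `s`
in `T₁, T₂, T₄`. -/
theorem stmt2 (l : ℚ) (s : ℕ) : (bpol l s).IsHomogeneous s := by
  simpa [bpol, ← coeff_zero_eq_eval_zero] using coeffHomogeneous_Ppol l s 0
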